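/- (Solution of the machine policy optimization problem, Theorem 4 of the paper.) Let P̂ be a human model, r : 𝓗^T×𝓜^T → ℝ a reward function, and γ > 0. The machine policy Q̂ defined from the Y_γ backward recursion maximizes the entropy-regularized expected reward: for every machine policy Q, H_{P̂Q}(M^T‖H^T) + γ·E_{P̂Q}[r(H^T,M^T)] ≤ H_{P̂Q̂}(M^T‖H^T) + γ·E_{P̂Q̂}[r(H^T,M^T)]. -/

import Mathlib

/-! Common framework: finite-horizon human–machine interaction processes.
Times are 0-indexed: step `t : Fin T` corresponds to the paper's step `t+1`.
A human model gives conditional PMFs `P(h_t | h^{t-1}, m^t)`: the value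
`p t h m a` may depend only on `h s` for `s < t`, on `m s` for `s ≤ t`, and on `a`.
A machine policy gives conditional PMFs `Q(m_t | h^{t-1}, m^{t-1})`: the value
`q t h m b` may depend only on `h s`, `m s` for `s < t`, and on `b`. -/

structure HumanModel (T : ℕ) (H M : Type*) [Fintype H] where
  p : Fin T → (Fin T → H) → (Fin T → M) → H → ℝ
  causal : ∀ (t : Fin T) (h h' : Fin T → H) (m m' : Fin T → M),
      (∀ s, s < t → h s = h' s) → (∀ s, s ≤ t → m s = m' s) → p t h m = p t h' m'
  nonneg : ∀ t h m a, 0 ≤ p t h m a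
  sum_one : ∀ t h m, ∑ a, p t h m a = 1

structure MachinePolicy (T : ℕ) (H M : Type*) [Fintype M] where
  q : Fin T → (Fin T → H) → (Fin T → M) → M → ℝ
  causal : ∀ (t : Fin T) (h h' : Fin T → H) (m m' : Fin T → M),
      (∀ s, s < t → h s = h' s) → (∀ s, s < t → m s = m' s) → q t h m = q t h' m'
  nonneg : ∀ t h m b, 0 ≤ q t h m b
  sum_one : ∀ t h m, ∑ b, q t h m b = 1

variable {T : ℕ} {H M : Type*} [Fintype H] [Fintype M]

/-- Causally conditioned distribution of the human: `P(h^T ‖ m^T)`. -/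
noncomputable def HumanModel.cc (P : HumanModel T H M) (h : Fin T → H) (m : Fin T → M) : ℝ :=
  ∏ t, P.p t h m (h t)

/-- Causally conditioned distribution of the machine: `Q(m^T ‖ h^T)`. -/
noncomputable def MachinePolicy.cc (Q : MachinePolicy T H M) (h : Fin T → H) (m : Fin T → M) : ℝ :=
  ∏ t, Q.q t h m (m t)

/-- Joint PMF `PQ(h^T, m^T)`. -/
noncomputable def jointPMF (P : HumanModel T H M) (Q : MachinePolicy T H M)
    (h : Fin T → H) (m : Fin T → M) : ℝ :=
  P.cc h m * Q.cc h m

/-- Expectation `E_{PQ}[φ(H^T, M^T)]`. -/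
noncomputable def expVal (P : HumanModel T H M) (Q : MachinePolicy T H M)
    (φ : (Fin T → H) → (Fin T → M) → ℝ) : ℝ :=
  ∑ h : Fin T → H, ∑ m : Fin T → M, jointPMF P Q h m * φ h m

/-- Causally conditioned entropy of the human, `H_{PQ}(H^T ‖ M^T)`. -/
noncomputable def humanEntropy (P : HumanModel T H M) (Q : MachinePolicy T H M) : ℝ :=
  ∑ h : Fin T → H, ∑ m : Fin T → M, jointPMF P Q h m * (- Real.log (P.cc h m))

/-- Causally conditioned entropy of the machine, `H_{PQ}(M^T ‖ H^T)`. -/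
noncomputable def machineEntropy (P : HumanModel T H M) (Q : MachinePolicy T H M) : ℝ :=
  ∑ h : Fin T → H, ∑ m : Fin T → M, jointPMF P Q h m * (- Real.log (Q.cc h m))

lemma idx_lt (T k : ℕ) [NeZero T] : T - 1 - k < T := by
  have := Nat.pos_of_ne_zero (NeZero.ne T); omega

variable [NeZero T]

/-- Backward recursion for `Y_γ(m_t | h^{t-1}, m^{t-1})`, parameterized by fuel
`k = (T-1) - t`. `Yaux P r γ k h m` is `Y_γ(m_t | h^{t-1}, m^{t-1})` at (0-indexed)
step `t = T - 1 - k`, where the current machine action `m_t` is read off as `m t`. -/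
noncomputable def Yaux (P : HumanModel T H M)
    (r : (Fin T → H) → (Fin T → M) → ℝ) (γ : ℝ) :
    ℕ → (Fin T → H) → (Fin T → M) → ℝ
  | 0, h, m =>
      Real.exp (γ * ∑ a : H, P.p ⟨T - 1, idx_lt T 0⟩ h m a *
        r (Function.update h ⟨T - 1, idx_lt T 0⟩ a) m)
  | k + 1, h, m =>
      Real.exp (∑ a : H, P.p ⟨T - 1 - (k + 1), idx_lt T (k + 1)⟩ h m a *
        Real.log (∑ b : M, Yaux P r γ k
          (Function.update h ⟨T - 1 - (k + 1), idx_lt T (k + 1)⟩ a)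
          (Function.update m ⟨T - 1 - k, idx_lt T k⟩ b)))

/-- `Y_γ(m_t | h^{t-1}, m^{t-1})` at step `t`, with `m_t = m t`. -/
noncomputable def Ycond (P : HumanModel T H M)
    (r : (Fin T → H) → (Fin T → M) → ℝ) (γ : ℝ) (t : Fin T)
    (h : Fin T → H) (m : Fin T → M) : ℝ :=
  Yaux P r γ (T - 1 - t.val) h m

/-- `Q` is the optimal machine policy `Q̂` obtained from the `Y_γ` backward recursion:
`Q̂(m_t | h^{t-1}, m^{t-1}) = Y_γ(m_t | h^{t-1}, m^{t-1}) / Y_γ(h^{t-1}, m^{t-1})`. -/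
def IsOptMachine (P : HumanModel T H M)
    (r : (Fin T → H) → (Fin T → M) → ℝ) (γ : ℝ) (Q : MachinePolicy T H M) : Prop :=
  ∀ (t : Fin T) (h : Fin T → H) (m : Fin T → M) (b : M),
    Q.q t h m b = Ycond P r γ t h (Function.update m t b) /
      ∑ b' : M, Ycond P r γ t h (Function.update m t b')

/-!
Since `Q̂(m_t | ·) = Y_γ(m_t | ·) / Y_γ(h^{t-1}, m^{t-1})` and `log Y_γ(m_t | ·)` is the
`P̂`-average of `log Y_γ(h^t, m^t)`, backward induction over the steps shows that the
conditional expectation of `log Q̂(M^T‖H^T) - γ r` given the first `t` steps is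
`-log Y_γ(h^{t-1}, m^{t-1})`, under `P̂Q` for *every* machine policy `Q`. At `t = 1` this makes
the objective of `Q` equal to `log Y_γ(h^0, m^0) - KL(P̂Q ‖ P̂Q̂)`, and Gibbs' inequality makes
the divergence nonnegative, vanishing at `Q = Q̂`.
-/

open Finset Function Real

lemma mul_log_sub_log_le_sub {p q : ℝ} (hp : 0 ≤ p) (hq : 0 < q) :
    p * (log q - log p) ≤ q - p := by
  obtain rfl | hp := hp.eq_or_lt
  · simpa using hq.le
  · have key := log_le_sub_one_of_pos (div_pos hq hp)
    rw [log_div hq.ne' hp.ne'] at key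
    calc p * (log q - log p) ≤ p * (q / p - 1) := mul_le_mul_of_nonneg_left key hp.le
      _ = q - p := by field_simp

section Trajectories

variable {T : ℕ}

@[to_additive]
lemma prod_le_val_eq_mul {R : Type*} [CommMonoid R] (t : Fin T) (f : Fin T → R) :
    ∏ s ∈ univ.filter fun s : Fin T => (t : ℕ) ≤ s, f s =
      f t * ∏ s ∈ univ.filter fun s : Fin T => (t : ℕ) + 1 ≤ s, f s := by
  rw [← prod_insert (by simp)]
  congr 1
  ext s
  simp only [mem_filter, mem_univ, true_and, mem_insert, Fin.ext_iff]
  omega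

lemma filter_le_val_eq_empty {n : ℕ} (hn : T ≤ n) :
    univ.filter (fun s : Fin T => n ≤ (s : ℕ)) = ∅ :=
  filter_false_of_mem fun s _ => by have := s.2; omega

section Cylinder

variable {X : Type*} [Fintype X]

open Classical in
noncomputable def cylinder (n : ℕ) (x : Fin T → X) : Finset (Fin T → X) :=
  {y | ∀ s : Fin T, (s : ℕ) < n → y s = x s}

lemma mem_cylinder {n : ℕ} {x y : Fin T → X} :
    y ∈ cylinder n x ↔ ∀ s : Fin T, (s : ℕ) < n → y s = x s := by
  simp [cylinder]

lemma cylinder_zero (x : Fin T → X) : cylinder 0 x = univ := by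
  ext y
  simp [mem_cylinder]

lemma cylinder_of_le {n : ℕ} (hn : T ≤ n) (x : Fin T → X) : cylinder n x = {x} := by
  ext y
  simp only [mem_cylinder, mem_singleton, funext_iff]
  exact ⟨fun hy s => hy s (s.2.trans_le hn), fun hy s _ => hy s⟩

lemma mem_cylinder_succ_update {t : Fin T} {x y : Fin T → X} {a : X} :
    y ∈ cylinder (t + 1) (update x t a) ↔ y ∈ cylinder t x ∧ y t = a := by
  simp only [mem_cylinder]
  constructor
  · intro hy
    refine ⟨fun s hs => ?_, by simpa using hy t (Nat.lt_succ_self _)⟩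
    rw [hy s (Nat.lt_succ_of_lt hs), update_of_ne (Fin.ne_of_lt hs)]
  · rintro ⟨hy, rfl⟩ s hs
    obtain hs | hs := Nat.lt_succ_iff_lt_or_eq.mp hs
    · rw [update_of_ne (Fin.ne_of_lt hs), hy s hs]
    · rw [Fin.ext hs, update_self]

lemma sum_cylinder_succ {β : Type*} [AddCommMonoid β] (t : Fin T) (x : Fin T → X)
    (f : (Fin T → X) → β) :
    ∑ y ∈ cylinder t x, f y = ∑ a, ∑ y ∈ cylinder (t + 1) (update x t a), f y := by
  classical
  rw [← sum_fiberwise (cylinder t x) (fun y => y t) f]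
  refine sum_congr rfl fun a _ => sum_congr ?_ fun _ _ => rfl
  ext y
  rw [mem_filter, mem_cylinder_succ_update]

end Cylinder

variable {H M : Type*} [Fintype H] [Fintype M]

lemma HumanModel.p_eq_of_mem_cylinder (P : HumanModel T H M) {t : Fin T} {h h' : Fin T → H}
    {m m' : Fin T → M} (hh : h' ∈ cylinder t h) (hm : m' ∈ cylinder (t + 1) m) :
    P.p t h' m' = P.p t h m :=
  P.causal t h' h m' m (mem_cylinder.1 hh) fun s hs => mem_cylinder.1 hm s (Nat.lt_succ_of_le hs)

lemma MachinePolicy.q_eq_of_mem_cylinder (Q : MachinePolicy T H M) {t : Fin T} {h h' : Fin T → H}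
    {m m' : Fin T → M} (hh : h' ∈ cylinder t h) (hm : m' ∈ cylinder t m) :
    Q.q t h' m' = Q.q t h m :=
  Q.causal t h' h m' m (mem_cylinder.1 hh) (mem_cylinder.1 hm)

section Expectation

variable (P : HumanModel T H M) (Q : MachinePolicy T H M)

noncomputable def tailWeight (n : ℕ) (h : Fin T → H) (m : Fin T → M) : ℝ :=
  ∏ s ∈ univ.filter fun s : Fin T => n ≤ (s : ℕ), P.p s h m (h s) * Q.q s h m (m s)

/-- `E_{PQ}[φ | h^n, m^n]`: on the cylinder of continuations of the first `n` steps of `(h, m)`,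
the tail weights are the conditional probabilities. -/
noncomputable def condExpect (n : ℕ) (φ : (Fin T → H) → (Fin T → M) → ℝ) (h : Fin T → H)
    (m : Fin T → M) : ℝ :=
  ∑ h' ∈ cylinder n h, ∑ m' ∈ cylinder n m, tailWeight P Q n h' m' * φ h' m'

lemma tailWeight_of_mem_cylinder {t : Fin T} {h h' : Fin T → H} {m m' : Fin T → M} {a : H}
    {b : M} (hh : h' ∈ cylinder (t + 1) (update h t a))
    (hm : m' ∈ cylinder (t + 1) (update m t b)) :
    tailWeight P Q t h' m' =
      Q.q t h m b * (P.p t h (update m t b) a * tailWeight P Q (t + 1) h' m') := by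
  obtain ⟨hh₀, rfl⟩ := mem_cylinder_succ_update.1 hh
  obtain ⟨hm₀, rfl⟩ := mem_cylinder_succ_update.1 hm
  rw [tailWeight, prod_le_val_eq_mul, P.p_eq_of_mem_cylinder hh₀ hm, Q.q_eq_of_mem_cylinder hh₀ hm₀,
    tailWeight]
  ring

lemma condExpect_zero (φ : (Fin T → H) → (Fin T → M) → ℝ) (h : Fin T → H) (m : Fin T → M) :
    condExpect P Q 0 φ h m = ∑ h', ∑ m', jointPMF P Q h' m' * φ h' m' := by
  simp [condExpect, cylinder_zero, tailWeight, jointPMF, HumanModel.cc, MachinePolicy.cc,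
    prod_mul_distrib]

lemma condExpect_of_le {n : ℕ} (hn : T ≤ n) (φ : (Fin T → H) → (Fin T → M) → ℝ) (h : Fin T → H)
    (m : Fin T → M) : condExpect P Q n φ h m = φ h m := by
  simp [condExpect, cylinder_of_le hn, tailWeight, filter_le_val_eq_empty hn]

lemma condExpect_succ (t : Fin T) (φ : (Fin T → H) → (Fin T → M) → ℝ) (h : Fin T → H)
    (m : Fin T → M) :
    condExpect P Q t φ h m = ∑ b, Q.q t h m b * ∑ a, P.p t h (update m t b) a *
      condExpect P Q (t + 1) φ (update h t a) (update m t b) := by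
  calc condExpect P Q t φ h m
      = ∑ a, ∑ h' ∈ cylinder (t + 1) (update h t a), ∑ b, ∑ m' ∈ cylinder (t + 1) (update m t b),
          tailWeight P Q t h' m' * φ h' m' := by
        simp_rw [condExpect, sum_cylinder_succ t]
    _ = ∑ a, ∑ b, ∑ h' ∈ cylinder (t + 1) (update h t a), ∑ m' ∈ cylinder (t + 1) (update m t b),
          Q.q t h m b * (P.p t h (update m t b) a * (tailWeight P Q (t + 1) h' m' * φ h' m')) := by
        refine sum_congr rfl fun a _ => ?_
        rw [sum_comm]
        refine sum_congr rfl fun b _ => sum_congr rfl fun h' hh => sum_congr rfl fun m' hm => ?_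
        rw [tailWeight_of_mem_cylinder P Q hh hm]
        ring
    _ = _ := by
        rw [sum_comm]
        simp only [condExpect, mul_sum]

lemma condExpect_one {n : ℕ} (hn : n ≤ T) (h : Fin T → H) (m : Fin T → M) :
    condExpect P Q n (fun _ _ => 1) h m = 1 := by
  induction hn using Nat.decreasingInduction generalizing h m with
  | self => exact condExpect_of_le P Q le_rfl _ h m
  | of_succ k hk ih =>
    obtain ⟨t, rfl⟩ : ∃ t : Fin T, (t : ℕ) = k := ⟨⟨k, hk⟩, rfl⟩
    simp [condExpect_succ, ih, P.sum_one, Q.sum_one]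

lemma condExpect_add_of_forall_mem_cylinder {n : ℕ} (hn : n ≤ T)
    {c φ : (Fin T → H) → (Fin T → M) → ℝ} {κ : ℝ} {h : Fin T → H} {m : Fin T → M}
    (hc : ∀ h' ∈ cylinder n h, ∀ m' ∈ cylinder n m, c h' m' = κ) :
    condExpect P Q n (fun h' m' => c h' m' + φ h' m') h m = κ + condExpect P Q n φ h m := by
  have hmass := condExpect_one P Q hn h m
  simp only [condExpect, mul_one] at hmass ⊢
  calc _ = ∑ h' ∈ cylinder n h, ∑ m' ∈ cylinder n m,
          (κ * tailWeight P Q n h' m' + tailWeight P Q n h' m' * φ h' m') :=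
        sum_congr rfl fun h' hh => sum_congr rfl fun m' hm => by rw [hc h' hh m' hm]; ring
    _ = κ * ∑ h' ∈ cylinder n h, ∑ m' ∈ cylinder n m, tailWeight P Q n h' m' +
          ∑ h' ∈ cylinder n h, ∑ m' ∈ cylinder n m, tailWeight P Q n h' m' * φ h' m' := by
        simp only [sum_add_distrib, mul_sum]
    _ = _ := by rw [hmass, mul_one]

lemma sum_jointPMF [Nonempty H] [Nonempty M] : ∑ h, ∑ m, jointPMF P Q h m = 1 := by
  simpa [condExpect_zero] using
    condExpect_one P Q (Nat.zero_le T) (Classical.arbitrary _) (Classical.arbitrary _)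

end Expectation

noncomputable def tailLogLik (Q : MachinePolicy T H M) (n : ℕ) (h : Fin T → H) (m : Fin T → M) :
    ℝ :=
  ∑ s ∈ univ.filter fun s : Fin T => n ≤ (s : ℕ), log (Q.q s h m (m s))

noncomputable def jointKL (P : HumanModel T H M) (Q Q' : MachinePolicy T H M) : ℝ :=
  ∑ h, ∑ m, jointPMF P Q h m * (log (Q.cc h m) - log (Q'.cc h m))

lemma jointKL_self (P : HumanModel T H M) (Q : MachinePolicy T H M) : jointKL P Q Q = 0 := by
  simp [jointKL]

lemma jointKL_nonneg [Nonempty H] [Nonempty M] (P : HumanModel T H M)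
    {Q Q' : MachinePolicy T H M} (hQ' : ∀ h m, 0 < Q'.cc h m) : 0 ≤ jointKL P Q Q' := by
  have hterm : ∀ h m, jointPMF P Q h m - jointPMF P Q' h m ≤
      jointPMF P Q h m * (log (Q.cc h m) - log (Q'.cc h m)) := fun h m => by
    have hP : 0 ≤ P.cc h m := prod_nonneg fun t _ => P.nonneg t h m (h t)
    have hQ : 0 ≤ Q.cc h m := prod_nonneg fun t _ => Q.nonneg t h m (m t)
    have := mul_le_mul_of_nonneg_left (mul_log_sub_log_le_sub hQ (hQ' h m)) hP
    simp only [jointPMF]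
    linarith
  have := sum_le_sum fun h (_ : h ∈ univ) => sum_le_sum fun m (_ : m ∈ univ) => hterm h m
  unfold jointKL
  simpa [sum_sub_distrib, sum_jointPMF] using this

end Trajectories

section SoftValue

variable (P : HumanModel T H M) (r : (Fin T → H) → (Fin T → M) → ℝ) (γ : ℝ)

lemma Ycond_pos (t : Fin T) (h : Fin T → H) (m : Fin T → M) : 0 < Ycond P r γ t h m := by
  unfold Ycond
  cases T - 1 - (t : ℕ) <;> exact exp_pos _

/-- `log Y_γ(h^{n-1}, m^{n-1})` for `n < T`, and `γ r` at the horizon. -/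
noncomputable def softValue (n : ℕ) (h : Fin T → H) (m : Fin T → M) : ℝ :=
  if hn : n < T then log (∑ b, Ycond P r γ ⟨n, hn⟩ h (update m ⟨n, hn⟩ b)) else γ * r h m

lemma log_Ycond (t : Fin T) (h : Fin T → H) (m : Fin T → M) :
    log (Ycond P r γ t h m) = ∑ a, P.p t h m a * softValue P r γ (t + 1) (update h t a) m := by
  by_cases ht : (t : ℕ) + 1 < T
  · obtain ⟨k, hk⟩ : ∃ k, T - 1 - (t : ℕ) = k + 1 := ⟨T - 2 - t, by omega⟩
    have e₁ : (⟨T - 1 - (k + 1), idx_lt T (k + 1)⟩ : Fin T) = t := Fin.ext (by simp only; omega)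
    have e₂ : (⟨T - 1 - k, idx_lt T k⟩ : Fin T) = ⟨t + 1, ht⟩ := Fin.ext (by simp only; omega)
    have e₃ : T - 1 - ((t : ℕ) + 1) = k := by omega
    rw [Ycond, hk, Yaux, log_exp, e₁, e₂]
    simp only [softValue, dif_pos ht, Ycond, e₃]
  · have e : (⟨T - 1, idx_lt T 0⟩ : Fin T) = t := Fin.ext (by simp only; omega)
    rw [Ycond, show T - 1 - (t : ℕ) = 0 by omega, Yaux, log_exp, e, mul_sum]
    simp only [softValue, dif_neg ht, mul_left_comm]

variable {P r γ}

lemma IsOptMachine.q_pos {Q : MachinePolicy T H M} (hQ : IsOptMachine P r γ Q) (t : Fin T)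
    (h : Fin T → H) (m : Fin T → M) (b : M) : 0 < Q.q t h m b := by
  rw [hQ]
  exact div_pos (Ycond_pos ..) (sum_pos (fun _ _ => Ycond_pos ..) ⟨b, mem_univ b⟩)

lemma IsOptMachine.log_q {Q : MachinePolicy T H M} (hQ : IsOptMachine P r γ Q) (t : Fin T)
    (h : Fin T → H) (m : Fin T → M) (b : M) :
    log (Q.q t h m b) = log (Ycond P r γ t h (update m t b)) - softValue P r γ t h m := by
  rw [hQ, log_div (Ycond_pos ..).ne' (sum_pos (fun _ _ => Ycond_pos ..) ⟨b, mem_univ b⟩).ne']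
  simp only [softValue, dif_pos t.2, Fin.eta]

theorem condExpect_tailLogLik_sub {Qhat : MachinePolicy T H M} (hQhat : IsOptMachine P r γ Qhat)
    (Q : MachinePolicy T H M) {n : ℕ} (hn : n ≤ T) (h : Fin T → H) (m : Fin T → M) :
    condExpect P Q n (fun h m => tailLogLik Qhat n h m - γ * r h m) h m =
      -softValue P r γ n h m := by
  induction hn using Nat.decreasingInduction generalizing h m with
  | self =>
    simp [condExpect_of_le, tailLogLik, softValue, filter_le_val_eq_empty]
  | of_succ k hk ih =>
    obtain ⟨t, rfl⟩ : ∃ t : Fin T, (t : ℕ) = k := ⟨⟨k, hk⟩, rfl⟩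
    have hsplit : (fun h' m' => tailLogLik Qhat t h' m' - γ * r h' m') = fun h' m' =>
        log (Qhat.q t h' m' (m' t)) + (tailLogLik Qhat (t + 1) h' m' - γ * r h' m') := by
      funext h' m'
      rw [tailLogLik, sum_le_val_eq_add, tailLogLik]
      ring
    have hstep : ∀ a b, condExpect P Q (t + 1) (fun h' m' => log (Qhat.q t h' m' (m' t)) +
        (tailLogLik Qhat (t + 1) h' m' - γ * r h' m')) (update h t a) (update m t b) =
          log (Qhat.q t h m b) - softValue P r γ (t + 1) (update h t a) (update m t b) := by
      intro a b
      rw [condExpect_add_of_forall_mem_cylinder P Q hk, ih, sub_eq_add_neg]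
      intro h' hh m' hm
      obtain ⟨hh₀, -⟩ := mem_cylinder_succ_update.1 hh
      obtain ⟨hm₀, rfl⟩ := mem_cylinder_succ_update.1 hm
      rw [Qhat.q_eq_of_mem_cylinder hh₀ hm₀]
    have hinner : ∀ b, ∑ a, P.p t h (update m t b) a * (log (Qhat.q t h m b) -
        softValue P r γ (t + 1) (update h t a) (update m t b)) = -softValue P r γ t h m := by
      intro b
      rw [hQhat.log_q, log_Ycond]
      simp only [mul_sub, sum_sub_distrib, ← sum_mul, P.sum_one, one_mul]
      ring
    rw [condExpect_succ, hsplit]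
    simp only [hstep, hinner, ← sum_mul, Q.sum_one, one_mul]

theorem machineEntropy_add_expVal_eq {Qhat : MachinePolicy T H M} (hQhat : IsOptMachine P r γ Qhat)
    (Q : MachinePolicy T H M) (h : Fin T → H) (m : Fin T → M) :
    machineEntropy P Q + γ * expVal P Q r = softValue P r γ 0 h m - jointKL P Q Qhat := by
  have hlog : ∀ h m, log (Qhat.cc h m) = tailLogLik Qhat 0 h m := fun h m => by
    rw [MachinePolicy.cc, log_prod fun t _ => (hQhat.q_pos t h m (m t)).ne']
    simp [tailLogLik]
  have hV := condExpect_tailLogLik_sub hQhat Q (Nat.zero_le T) h m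
  simp only [condExpect_zero, ← hlog] at hV
  rw [← neg_neg (softValue P r γ 0 h m), ← hV, machineEntropy, expVal, jointKL, mul_sum]
  simp only [mul_sum, ← sum_neg_distrib, ← sum_sub_distrib, ← sum_add_distrib]
  refine sum_congr rfl fun h' _ => sum_congr rfl fun m' _ => by ring

end SoftValue

theorem optMachine_maximizes_general [Nonempty H] [Nonempty M]
    (Phat : HumanModel T H M) (r : (Fin T → H) → (Fin T → M) → ℝ)
    (γ : ℝ)
    (Qhat : MachinePolicy T H M) (hQhat : IsOptMachine Phat r γ Qhat) :
    ∀ Q : MachinePolicy T H M,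
      machineEntropy Phat Q + γ * expVal Phat Q r ≤
        machineEntropy Phat Qhat + γ * expVal Phat Qhat r := by
  intro Q
  let h₀ : Fin T → H := Classical.arbitrary _
  let m₀ : Fin T → M := Classical.arbitrary _
  rw [machineEntropy_add_expVal_eq hQhat Q h₀ m₀, machineEntropy_add_expVal_eq hQhat Qhat h₀ m₀,
    jointKL_self, sub_zero, sub_le_self_iff]
  exact jointKL_nonneg Phat fun h m => prod_pos fun t _ => hQhat.q_pos t h m (m t)

/-- solution of the machine policy optimization problem, Theorem 4:
the machine policy `Q̂` obtained from the `Y_γ` backward recursion maximizes the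
entropy-regularized expected reward
`H_{P̂Q}(M^T‖H^T) + γ·E_{P̂Q}[r(H^T,M^T)]` over all machine policies `Q`. -/
theorem optMachine_maximizes [Nonempty H] [Nonempty M]
    (Phat : HumanModel T H M) (r : (Fin T → H) → (Fin T → M) → ℝ)
    (γ : ℝ) (hγ : 0 < γ)
    (Qhat : MachinePolicy T H M) (hQhat : IsOptMachine Phat r γ Qhat) :
    ∀ Q : MachinePolicy T H M,
      machineEntropy Phat Q + γ * expVal Phat Q r ≤
        machineEntropy Phat Qhat + γ * expVal Phat Qhat r :=
  optMachine_maximizes_general Phat r γ Qhat hQhat
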